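/- arXiv:1203.2785 — 2 statements merged into one kernel-verified Lean document; each statement's English description precedes it below -/
import Mathlib

section
/- For any prime Goldie ring S (an order in its simple Artinian total quotient ring Q) the following are equivalent: (1) the ascending chain condition holds for regular integral right divisorial ideals of S; (2) for any regular integral (respectively fractional) right ideal I of S there exists a finitely generated integral (respectively fractional) right ideal J ⊆ I such that I^ν = J^ν. -/
/-! Basic notions for orders in a simple Artinian ring, following Halimi,
"Right Mori orders". Throughout, `Q` is a ring and `S` a subring of `Q`. -/

section Preamble

variable {Q : Type*} [Ring Q]

/-- `a` is a regular element of the subring `S` of `Q`, i.e. `a ∈ S` and `a` is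
neither a left nor a right zero divisor in `S`. -/
def IsRegularElemIn (S : Subring Q) (a : Q) : Prop :=
  a ∈ S ∧ (∀ b ∈ S, a * b = 0 → b = 0) ∧ (∀ b ∈ S, b * a = 0 → b = 0)

/-- `S` is an order in `Q`: every regular element of `S` is a unit of `Q` and every
element of `Q` is both a left fraction and a right fraction over `S`. -/
def IsOrderIn (S : Subring Q) : Prop :=
  (∀ a : Q, IsRegularElemIn S a → IsUnit a) ∧
  (∀ q : Q, ∃ a b : Q, a ∈ S ∧ IsRegularElemIn S b ∧ b * q = a) ∧
  (∀ q : Q, ∃ a b : Q, a ∈ S ∧ IsRegularElemIn S b ∧ q * b = a)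

/-- A subset of `Q` that is a right `S`-submodule of `Q`. -/
def IsRightModSet (S : Subring Q) (I : Set Q) : Prop :=
  (0 : Q) ∈ I ∧ (∀ x ∈ I, ∀ y ∈ I, x + y ∈ I) ∧ (∀ x ∈ I, -x ∈ I) ∧
    ∀ x ∈ I, ∀ s ∈ S, x * s ∈ I

/-- A subset of `Q` that is a left `S`-submodule of `Q`. -/
def IsLeftModSet (S : Subring Q) (I : Set Q) : Prop :=
  (0 : Q) ∈ I ∧ (∀ x ∈ I, ∀ y ∈ I, x + y ∈ I) ∧ (∀ x ∈ I, -x ∈ I) ∧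
    ∀ x ∈ I, ∀ s ∈ S, s * x ∈ I

/-- A (integral) right ideal of `S`, viewed as a subset of `Q`. -/
def IsRightIdealSet (S : Subring Q) (I : Set Q) : Prop :=
  IsRightModSet S I ∧ I ⊆ (S : Set Q)

/-- A (integral) left ideal of `S`, viewed as a subset of `Q`. -/
def IsLeftIdealSet (S : Subring Q) (I : Set Q) : Prop :=
  IsLeftModSet S I ∧ I ⊆ (S : Set Q)

/-- `(A : B)_r = {q ∈ Q : B q ⊆ A}`. -/
def colonR (A B : Set Q) : Set Q := {q : Q | ∀ b ∈ B, b * q ∈ A}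

/-- `(A : B)_l = {q ∈ Q : q B ⊆ A}`. -/
def colonL (A B : Set Q) : Set Q := {q : Q | ∀ b ∈ B, q * b ∈ A}

/-- `I^ν = (S : (S : I)_l)_r`. -/
def nuR (S : Subring Q) (I : Set Q) : Set Q := colonR (S : Set Q) (colonL (S : Set Q) I)

/-- `^ν I = (S : (S : I)_r)_l`. -/
def nuL (S : Subring Q) (I : Set Q) : Set Q := colonL (S : Set Q) (colonR (S : Set Q) I)

/-- A (fractional) right `S`-ideal: a right `S`-submodule of `Q` containing a regular
element of `S` and with `uI ⊆ S` for some unit `u` of `Q`. -/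
def IsRightSIdeal (S : Subring Q) (I : Set Q) : Prop :=
  IsRightModSet S I ∧ (∃ a ∈ I, IsRegularElemIn S a) ∧
    ∃ u : Qˣ, ∀ x ∈ I, (u : Q) * x ∈ S

/-- A (fractional) left `S`-ideal. -/
def IsLeftSIdeal (S : Subring Q) (I : Set Q) : Prop :=
  IsLeftModSet S I ∧ (∃ a ∈ I, IsRegularElemIn S a) ∧
    ∃ u : Qˣ, ∀ x ∈ I, x * (u : Q) ∈ S

/-- A completely prime right ideal of `S`: a proper right ideal `P` such that for all
`a, b ∈ S`, `aP ⊆ P` and `ab ∈ P` imply `a ∈ P` or `b ∈ P`. -/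
def IsCompletelyPrimeRightIdeal (S : Subring Q) (P : Set Q) : Prop :=
  IsRightIdealSet S P ∧ P ≠ (S : Set Q) ∧
    ∀ a ∈ S, ∀ b ∈ S, (∀ p ∈ P, a * p ∈ P) → a * b ∈ P → a ∈ P ∨ b ∈ P

/-- The right `S`-submodule of `Q` generated by a set `G`. -/
def rightSpan (S : Subring Q) (G : Set Q) : Set Q :=
  ⋂₀ {J : Set Q | IsRightModSet S J ∧ G ⊆ J}

/-- The left `S`-submodule of `Q` generated by a set `G`. -/
def leftSpan (S : Subring Q) (G : Set Q) : Set Q :=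
  ⋂₀ {J : Set Q | IsLeftModSet S J ∧ G ⊆ J}

/-- `I` is a finitely generated right `S`-submodule of `Q`. -/
def IsFGRightModSet (S : Subring Q) (I : Set Q) : Prop :=
  ∃ G : Finset Q, I = rightSpan S ↑G

/-- The ascending chain condition on regular integral right divisorial ideals of `S`. -/
def ACCRightDivisorial (S : Subring Q) : Prop :=
  ∀ f : ℕ → Set Q,
    (∀ n, IsRightIdealSet S (f n) ∧ (∃ a ∈ f n, IsRegularElemIn S a) ∧ nuR S (f n) = f n) →
    (∀ n, f n ⊆ f (n + 1)) → ∃ N, ∀ n, N ≤ n → f n = f N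

/-- The ascending chain condition on regular integral left divisorial ideals of `S`. -/
def ACCLeftDivisorial (S : Subring Q) : Prop :=
  ∀ f : ℕ → Set Q,
    (∀ n, IsLeftIdealSet S (f n) ∧ (∃ a ∈ f n, IsRegularElemIn S a) ∧ nuL S (f n) = f n) →
    (∀ n, f n ⊆ f (n + 1)) → ∃ N, ∀ n, N ≤ n → f n = f N

/-- A right Mori order: an order satisfying the ACC on regular integral right
divisorial ideals. -/
def IsRightMori (S : Subring Q) : Prop := IsOrderIn S ∧ ACCRightDivisorial S

/-- The principal right ideal `aS` of `S`, as a subset of `Q`. -/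
def principalRight (S : Subring Q) (a : Q) : Set Q := {x : Q | ∃ s ∈ S, x = a * s}

/-- The principal left ideal `Sa` of `S`, as a subset of `Q`. -/
def principalLeft (S : Subring Q) (a : Q) : Set Q := {x : Q | ∃ s ∈ S, x = s * a}

/-- A two-sided (integral) ideal of `S`, as a subset of `Q`. -/
def IsTwoSidedIdealSet (S : Subring Q) (I : Set Q) : Prop :=
  IsRightModSet S I ∧ IsLeftModSet S I ∧ I ⊆ (S : Set Q)

/-- A maximal (proper) right ideal of `S`. -/
def IsMaxRightIdeal (S : Subring Q) (M : Set Q) : Prop :=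
  IsRightIdealSet S M ∧ M ≠ (S : Set Q) ∧
    ∀ N, IsRightIdealSet S N → N ≠ (S : Set Q) → M ⊆ N → N = M

/-- A maximal (proper) left ideal of `S`. -/
def IsMaxLeftIdeal (S : Subring Q) (M : Set Q) : Prop :=
  IsLeftIdealSet S M ∧ M ≠ (S : Set Q) ∧
    ∀ N, IsLeftIdealSet S N → N ≠ (S : Set Q) → M ⊆ N → N = M

/-- `S` is local with (Jacobson radical) `M`: `M` is a two-sided ideal which is the
only maximal right ideal and the only maximal left ideal of `S`. -/
def IsLocalWithMax (S : Subring Q) (M : Set Q) : Prop :=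
  IsTwoSidedIdealSet S M ∧
    IsMaxRightIdeal S M ∧ (∀ N, IsMaxRightIdeal S N → N = M) ∧
    IsMaxLeftIdeal S M ∧ (∀ N, IsMaxLeftIdeal S N → N = M)

/-- A local order. -/
def IsLocalOrder (S : Subring Q) : Prop := IsOrderIn S ∧ ∃ M : Set Q, IsLocalWithMax S M

/-- The additive span of the set of products `a * b` with `a ∈ A`, `b ∈ B`. -/
def mulSpan (A B : Set Q) : Set Q :=
  (AddSubgroup.closure {x : Q | ∃ a ∈ A, ∃ b ∈ B, x = a * b} : AddSubgroup Q)

/-- Powers `M^n` of an ideal `M` of `S` (with `M^0 = S`). -/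
def idealPow (S : Subring Q) (M : Set Q) : ℕ → Set Q
  | 0 => (S : Set Q)
  | n + 1 => mulSpan M (idealPow S M n)

/-- A right `τ`-ideal of `S`: a right ideal `J` such that `F^ν ⊆ J` for every finitely
generated right ideal `F ⊆ J`. -/
def IsRightTauIdeal (S : Subring Q) (J : Set Q) : Prop :=
  IsRightIdealSet S J ∧
    ∀ F : Set Q, IsRightIdealSet S F → IsFGRightModSet S F → F ⊆ J → nuR S F ⊆ J

/-- A maximal (proper) right `τ`-ideal of `S`. -/
def IsMaxRightTauIdeal (S : Subring Q) (M : Set Q) : Prop :=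
  IsRightTauIdeal S M ∧ M ≠ (S : Set Q) ∧
    ∀ N, IsRightTauIdeal S N → N ≠ (S : Set Q) → M ⊆ N → N = M

/-- A prime (two-sided) ideal of the order `S`. -/
def IsPrimeIdealSet (S : Subring Q) (P : Set Q) : Prop :=
  IsTwoSidedIdealSet S P ∧ P ≠ (S : Set Q) ∧
    ∀ a ∈ S, ∀ b ∈ S, (∀ s ∈ S, a * s * b ∈ P) → a ∈ P ∨ b ∈ P

/-- A divisorial two-sided (integral) ideal of `S`: `I = I^ν = ^ν I`. -/
def IsDivisorialIdealSet (S : Subring Q) (I : Set Q) : Prop :=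
  IsTwoSidedIdealSet S I ∧ nuR S I = I ∧ nuL S I = I

/-- `D_m(S)`: the set of maximal divisorial (two-sided, integral) ideals of `S`. -/
def maxDivisorialIdeals (S : Subring Q) : Set (Set Q) :=
  {P | IsDivisorialIdealSet S P ∧ P ≠ (S : Set Q) ∧
    ∀ J, IsDivisorialIdealSet S J → J ≠ (S : Set Q) → P ⊆ J → J = P}

/-- `c` is regular modulo the ideal `P` of `S`. -/
def IsRegularModP (S : Subring Q) (P : Set Q) (c : Q) : Prop :=
  c ∈ S ∧ (∀ b ∈ S, c * b ∈ P → b ∈ P) ∧ (∀ b ∈ S, b * c ∈ P → b ∈ P)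

/-- The left order `O_l(M) = {q ∈ Q : qM ⊆ M}` of `M`. -/
def leftOrderOf (M : Set Q) : Set Q := {q : Q | ∀ m ∈ M, q * m ∈ M}

/-- `s` is a unit of the subring `R` of `Q`. -/
def IsUnitIn (R : Subring Q) (s : Q) : Prop :=
  s ∈ R ∧ ∃ t ∈ R, s * t = 1 ∧ t * s = 1

/-- A family of overrings `S = ⋂ᵢ Sᵢ` is of finite character if every nonzero
non-unit of `S` is a non-unit of only finitely many `Sᵢ`. -/
def FiniteCharacter {α : Type*} (S : Subring Q) (F : α → Subring Q) : Prop :=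
  ∀ s ∈ S, s ≠ 0 → ¬IsUnitIn S s → {i : α | ¬IsUnitIn (F i) s}.Finite

/-- `S` is right pseudo-coherent: any (nonempty) finite intersection of principal
right ideals of `S` is a finitely generated right ideal. -/
def RightPseudoCoherent (S : Subring Q) : Prop :=
  ∀ F : Finset Q, ↑F ⊆ (S : Set Q) → F.Nonempty →
    IsFGRightModSet S (⋂ a ∈ F, principalRight S a)

/-- `A :_r x = {s ∈ S : x s ∈ A}`. -/
def colonByElemR (S : Subring Q) (A : Set Q) (x : Q) : Set Q :=
  {s : Q | s ∈ S ∧ x * s ∈ A}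

/-- A `ν`-irreducible right ideal: a right divisorial right ideal which is not the
intersection of two right divisorial right ideals properly containing it. -/
def IsNuIrreducible (S : Subring Q) (I : Set Q) : Prop :=
  IsRightIdealSet S I ∧ nuR S I = I ∧
    ¬∃ A B : Set Q, (IsRightIdealSet S A ∧ nuR S A = A) ∧
      (IsRightIdealSet S B ∧ nuR S B = B) ∧ I ⊂ A ∧ I ⊂ B ∧ I = A ∩ B

/-- A non-commutative (rank one) discrete valuation ring inside `Q`. -/
def IsNCDVR (R : Subring Q) : Prop :=
  IsOrderIn R ∧ ∃ M : Set Q, IsLocalWithMax R M ∧ M ≠ ({0} : Set Q) ∧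
    (∃ p : Q, IsRegularElemIn R p ∧ M = principalRight R p ∧ M = principalLeft R p) ∧
    (⋂ n : ℕ, idealPow R M n) = ({0} : Set Q)

/-- A Krull order in the sense of Marubayashi. -/
def IsKrullOrder (S : Subring Q) : Prop :=
  ∃ (A : Set (Subring Q)) (B : Finset (Subring Q)),
    (∀ R ∈ A, (S : Set Q) ⊆ ↑R ∧ IsNCDVR R) ∧
    (∀ T ∈ B, (S : Set Q) ⊆ ↑T ∧ IsSimpleRing T ∧ IsNoetherianRing T) ∧
    ((S : Set Q) = (⋂ R ∈ A, (R : Set Q)) ∩ ⋂ T ∈ B, (T : Set Q)) ∧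
    ∀ c : Q, IsRegularElemIn S c →
      {R ∈ A | principalRight R c ≠ (R : Set Q)}.Finite ∧
      {R ∈ A | principalLeft R c ≠ (R : Set Q)}.Finite

end Preamble

/-! Among the divisorial ideals `(GS)^ν`, for `G` a finite subset of `I` containing a fixed
regular element, the ACC provides a maximal one; maximality forces every `x ∈ I` into it, so
`I^ν = (GS)^ν`. A fractional `I` is moved into `S` by a unit `u` with `uI ⊆ S`; spans and `ν`
commute with left multiplication by units. Conversely, if `I = ⋃ fₙ` for a chain of divisorial
ideals and `J ⊆ I` is finitely generated with `I^ν = J^ν`, then `J ⊆ f_N` for some `N`, and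
`fₙ ⊆ I^ν = J^ν ⊆ f_N^ν = f_N`. -/

open scoped Pointwise

def IsNuFinite {Q : Type*} [Ring Q] (S : Subring Q) (I : Set Q) : Prop :=
  ∃ J : Set Q, IsFGRightModSet S J ∧ J ⊆ I ∧ nuR S I = nuR S J

def regularRightDivisorialIdeals {Q : Type*} [Ring Q] (S : Subring Q) : Set (Set Q) :=
  {J | IsRightIdealSet S J ∧ (∃ a ∈ J, IsRegularElemIn S a) ∧ nuR S J = J}

section

variable {Q : Type*} [Ring Q] (S : Subring Q)

lemma isRegularElemIn_of_isUnit {x : Q} (hx : x ∈ S) (hu : IsUnit x) : IsRegularElemIn S x :=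
  ⟨hx, fun _ _ hb => hu.mul_right_eq_zero.1 hb, fun _ _ hb => hu.mul_left_eq_zero.1 hb⟩

lemma IsRightModSet.unit_smul {J : Set Q} (hJ : IsRightModSet S J) (u : Qˣ) :
    IsRightModSet S (u • J) := by
  obtain ⟨h0, hadd, hneg, hmul⟩ := hJ
  refine ⟨⟨0, h0, smul_zero u⟩, ?_, ?_, ?_⟩
  · rintro _ ⟨x, hx, rfl⟩ _ ⟨y, hy, rfl⟩
    exact ⟨x + y, hadd x hx y hy, smul_add u x y⟩
  · rintro _ ⟨x, hx, rfl⟩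
    exact ⟨-x, hneg x hx, smul_neg u x⟩
  · rintro _ ⟨x, hx, rfl⟩ s hs
    exact ⟨x * s, hmul x hx s hs, (smul_mul_assoc u x s).symm⟩

lemma isRightModSet_iUnion_of_directed {ι : Type*} [Nonempty ι] {f : ι → Set Q}
    (hd : Directed (· ⊆ ·) f) (hf : ∀ i, IsRightModSet S (f i)) :
    IsRightModSet S (⋃ i, f i) := by
  obtain ⟨i₀⟩ := ‹Nonempty ι›
  simp only [IsRightModSet, Set.mem_iUnion]
  refine ⟨⟨i₀, (hf i₀).1⟩, ?_, ?_, ?_⟩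
  · rintro x ⟨i, hx⟩ y ⟨j, hy⟩
    obtain ⟨k, hik, hjk⟩ := hd i j
    exact ⟨k, (hf k).2.1 x (hik hx) y (hjk hy)⟩
  · rintro x ⟨i, hx⟩
    exact ⟨i, (hf i).2.2.1 x hx⟩
  · rintro x ⟨i, hx⟩ s hs
    exact ⟨i, (hf i).2.2.2 x hx s hs⟩

lemma subset_rightSpan (G : Set Q) : G ⊆ rightSpan S G :=
  fun _ hx _ hJ => hJ.2 hx

lemma isRightModSet_rightSpan (G : Set Q) : IsRightModSet S (rightSpan S G) :=
  ⟨fun _ hJ => hJ.1.1,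
    fun x hx y hy J hJ => hJ.1.2.1 x (hx J hJ) y (hy J hJ),
    fun x hx J hJ => hJ.1.2.2.1 x (hx J hJ),
    fun x hx s hs J hJ => hJ.1.2.2.2 x (hx J hJ) s hs⟩

lemma rightSpan_subset {G J : Set Q} (hJ : IsRightModSet S J) (h : G ⊆ J) :
    rightSpan S G ⊆ J :=
  fun _ hx => hx J ⟨hJ, h⟩

lemma rightSpan_mono {G G' : Set Q} (h : G ⊆ G') : rightSpan S G ⊆ rightSpan S G' :=
  rightSpan_subset S (isRightModSet_rightSpan S G') (h.trans (subset_rightSpan S G'))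

lemma rightSpan_unit_smul (u : Qˣ) (G : Set Q) : rightSpan S (u • G) = u • rightSpan S G := by
  have key : ∀ (v : Qˣ) (G : Set Q), rightSpan S (v • G) ⊆ v • rightSpan S G := fun v G =>
    rightSpan_subset S ((isRightModSet_rightSpan S G).unit_smul S v)
      (Set.smul_set_mono (subset_rightSpan S G))
  refine (key u G).antisymm ?_
  rw [Set.smul_set_subset_iff_subset_inv_smul_set]
  simpa only [inv_smul_smul] using key u⁻¹ (u • G)

lemma IsFGRightModSet.unit_smul {J : Set Q} (hJ : IsFGRightModSet S J) (u : Qˣ) :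
    IsFGRightModSet S (u • J) := by
  classical
  obtain ⟨G, rfl⟩ := hJ
  exact ⟨u • G, by rw [Finset.coe_smul_finset, rightSpan_unit_smul]⟩

lemma subset_nuR (A : Set Q) : A ⊆ nuR S A :=
  fun x hx _ hb => hb x hx

lemma nuR_mono {A B : Set Q} (h : A ⊆ B) : nuR S A ⊆ nuR S B :=
  fun _ hq b hb => hq b fun x hx => hb x (h hx)

lemma nuR_nuR (A : Set Q) : nuR S (nuR S A) = nuR S A :=
  Set.Subset.antisymm (fun _ hq b hb => hq b fun _ hy => hy b hb) (subset_nuR S _)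

lemma nuR_subset_subring {A : Set Q} (hA : A ⊆ S) : nuR S A ⊆ S := fun q hq => by
  simpa using hq 1 fun x hx => by simpa using hA hx

lemma isRightModSet_nuR (A : Set Q) : IsRightModSet S (nuR S A) := by
  refine ⟨fun b _ => by simp, fun x hx y hy b hb => ?_, fun x hx b hb => ?_,
    fun x hx s hs b hb => ?_⟩
  · rw [mul_add]; exact S.add_mem (hx b hb) (hy b hb)
  · rw [mul_neg]; exact S.neg_mem (hx b hb)
  · rw [← mul_assoc]; exact S.mul_mem (hx b hb) hs

lemma nuR_eq_of_subset_of_subset_nuR {I J : Set Q} (hJI : J ⊆ I) (hIJ : I ⊆ nuR S J) :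
    nuR S I = nuR S J :=
  ((nuR_mono S hIJ).trans (nuR_nuR S J).le).antisymm (nuR_mono S hJI)

lemma nuR_unit_smul (u : Qˣ) (A : Set Q) : nuR S (u • A) = u • nuR S A := by
  have key : ∀ (v : Qˣ) (A : Set Q), v • nuR S A ⊆ nuR S (v • A) := by
    rintro v A _ ⟨q, hq, rfl⟩ b hb
    have hbv : ∀ x ∈ A, b * v * x ∈ (S : Set Q) := fun x hx => by
      simpa only [Units.smul_def, smul_eq_mul, mul_assoc] using
        hb (v • x) (Set.smul_mem_smul_set hx)
    simpa only [Units.smul_def, smul_eq_mul, mul_assoc] using hq (b * v) hbv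
  refine subset_antisymm ?_ (key u A)
  rw [Set.subset_smul_set_iff]
  simpa only [inv_smul_smul] using key u⁻¹ (u • A)

lemma nuR_mem_regularRightDivisorialIdeals {A : Set Q} (hA : A ⊆ S) {a : Q} (ha : a ∈ A)
    (hreg : IsRegularElemIn S a) : nuR S A ∈ regularRightDivisorialIdeals S :=
  ⟨⟨isRightModSet_nuR S A, nuR_subset_subring S hA⟩, ⟨a, subset_nuR S A ha, hreg⟩, nuR_nuR S A⟩

lemma IsNuFinite.of_unit_smul {I : Set Q} (u : Qˣ) (h : IsNuFinite S (u • I)) :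
    IsNuFinite S I := by
  obtain ⟨J, hJ, hJI, hν⟩ := h
  refine ⟨u⁻¹ • J, hJ.unit_smul S u⁻¹, Set.subset_smul_set_iff.1 hJI, ?_⟩
  rw [nuR_unit_smul, ← hν, nuR_unit_smul, inv_smul_smul]

lemma IsRightSIdeal.exists_unit_smul_regular_integral (hS : IsOrderIn S) {I : Set Q}
    (hI : IsRightSIdeal S I) :
    ∃ u : Qˣ, IsRightIdealSet S (u • I) ∧ ∃ a ∈ u • I, IsRegularElemIn S a := by
  obtain ⟨hmod, ⟨a, haI, hreg⟩, u, hu⟩ := hI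
  exact ⟨u, ⟨hmod.unit_smul S u, Set.smul_set_subset_iff.2 hu⟩, u • a,
    Set.smul_mem_smul_set haI,
    isRegularElemIn_of_isUnit S (hu a haI) (u.isUnit.mul (hS.1 a hreg))⟩

lemma ACCRightDivisorial.wellFoundedGT (hacc : ACCRightDivisorial S) :
    WellFoundedGT (regularRightDivisorialIdeals S) :=
  wellFoundedGT_iff_monotone_chain_condition.2 fun f => by
    obtain ⟨N, hN⟩ := hacc (fun n => f n) (fun n => (f n).2) (fun n => f.mono n.le_succ)
    exact ⟨N, fun m hm => Subtype.ext (hN m hm).symm⟩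

lemma ACCRightDivisorial.isNuFinite (hacc : ACCRightDivisorial S) {I : Set Q}
    (hI : IsRightIdealSet S I) {a : Q} (ha : a ∈ I) (hreg : IsRegularElemIn S a) :
    IsNuFinite S I := by
  let Gens := {G : Finset Q // ↑G ⊆ I ∧ a ∈ G}
  let D : Gens → regularRightDivisorialIdeals S := fun G =>
    ⟨nuR S (rightSpan S G), nuR_mem_regularRightDivisorialIdeals S
      ((rightSpan_subset S hI.1 G.2.1).trans hI.2) (subset_rightSpan S _ G.2.2) hreg⟩
  have : Nonempty Gens := ⟨⟨{a}, by simpa using ha, Finset.mem_singleton_self a⟩⟩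
  obtain ⟨_, ⟨G, rfl⟩, hmax⟩ :=
    (hacc.wellFoundedGT S).wf.has_min (Set.range D) (Set.range_nonempty D)
  have hIG : I ⊆ nuR S (rightSpan S G) := by
    classical
    intro x hx
    let G' : Gens :=
      ⟨insert x G, by simpa using Set.insert_subset hx G.2.1, Finset.mem_insert_of_mem G.2.2⟩
    have hle : D G ≤ D G' := nuR_mono S (rightSpan_mono S (by simp [G']))
    have hGG' : D G = D G' := eq_of_le_of_not_lt hle (hmax (D G') ⟨G', rfl⟩)
    have hxG' : x ∈ (D G' : Set Q) :=
      subset_nuR S _ (subset_rightSpan S _ (by simp [G']))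
    rwa [← hGG'] at hxG'
  exact ⟨rightSpan S G, ⟨G, rfl⟩, rightSpan_subset S hI.1 G.2.1,
    nuR_eq_of_subset_of_subset_nuR S (rightSpan_subset S hI.1 G.2.1) hIG⟩

lemma accRightDivisorial_of_isNuFinite
    (h : ∀ I : Set Q, IsRightIdealSet S I → (∃ a ∈ I, IsRegularElemIn S a) → IsNuFinite S I) :
    ACCRightDivisorial S := by
  intro f hf hchain
  have hmono : Monotone f := monotone_nat_of_le_succ hchain
  have hU : IsRightIdealSet S (⋃ n, f n) :=
    ⟨isRightModSet_iUnion_of_directed S hmono.directed_le fun n => (hf n).1.1,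
      Set.iUnion_subset fun n => (hf n).1.2⟩
  obtain ⟨a, ha, hreg⟩ := (hf 0).2.1
  obtain ⟨J, ⟨G, rfl⟩, hJ, hν⟩ := h _ hU ⟨a, Set.mem_iUnion_of_mem 0 ha, hreg⟩
  obtain ⟨N, hN⟩ := hmono.directed_le.exists_mem_subset_of_finset_subset_biUnion
    ((subset_rightSpan S G).trans hJ)
  refine ⟨N, fun n hn => subset_antisymm ?_ (hmono hn)⟩
  calc f n = nuR S (f n) := (hf n).2.2.symm
    _ ⊆ nuR S (⋃ n, f n) := nuR_mono S (Set.subset_iUnion f n)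
    _ = nuR S (rightSpan S G) := hν
    _ ⊆ nuR S (f N) := nuR_mono S (rightSpan_subset S (hf N).1.1 hN)
    _ = f N := (hf N).2.2

end

theorem accRightDivisorial_iff_fg_nu_general
    {Q : Type*} [Ring Q]
    (S : Subring Q) (hS : IsOrderIn S) :
    ACCRightDivisorial S ↔
      ((∀ I : Set Q, IsRightIdealSet S I → (∃ a ∈ I, IsRegularElemIn S a) →
          ∃ J : Set Q, IsFGRightModSet S J ∧ J ⊆ I ∧ nuR S I = nuR S J) ∧
        (∀ I : Set Q, IsRightSIdeal S I →
          ∃ J : Set Q, IsFGRightModSet S J ∧ J ⊆ I ∧ nuR S I = nuR S J)) := by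
  refine ⟨fun hacc => ⟨?_, ?_⟩, fun h => accRightDivisorial_of_isNuFinite S h.1⟩
  · rintro I hI ⟨a, ha, hreg⟩
    exact hacc.isNuFinite S hI ha hreg
  · intro I hI
    obtain ⟨u, hu, a, ha, hreg⟩ := hI.exists_unit_smul_regular_integral S hS
    exact (hacc.isNuFinite S hu ha hreg).of_unit_smul S u

/-- Theorem 2.3. For a prime Goldie ring `S` (an order in its simple
Artinian quotient ring `Q`), the ACC on regular integral right divisorial ideals is
equivalent to: every regular integral (resp. fractional) right ideal `I` of `S`
contains a finitely generated integral (resp. fractional) right ideal `J` with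
`I^ν = J^ν`. -/
theorem accRightDivisorial_iff_fg_nu
    {Q : Type*} [Ring Q] [IsSimpleRing Q] [IsArtinianRing Q]
    (S : Subring Q) (hS : IsOrderIn S) :
    ACCRightDivisorial S ↔
      ((∀ I : Set Q, IsRightIdealSet S I → (∃ a ∈ I, IsRegularElemIn S a) →
          ∃ J : Set Q, IsFGRightModSet S J ∧ J ⊆ I ∧ nuR S I = nuR S J) ∧
        (∀ I : Set Q, IsRightSIdeal S I →
          ∃ J : Set Q, IsFGRightModSet S J ∧ J ⊆ I ∧ nuR S I = nuR S J)) :=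
  accRightDivisorial_iff_fg_nu_general S hS
end

section
/- Let {S_i}_{i in α} be a family of overrings of an order S in a simple Artinian ring Q with S = ∩_{i in α} S_i, of finite character. If S does not satisfy the ascending chain condition on the set of regular right divisorial ideals, then at least one of the rings S_i does not satisfy the ascending chain condition on its regular right divisorial ideals. -/
/-! A chain `I₀ ⊆ I₁ ⊆ ⋯` of regular right divisorial ideals of `S` is recovered from
the chains of their `ν`-closures in the overrings: `Iₙ = ⋂ᵢ (Iₙ)^ν_{Sᵢ}`, because
`S = ⋂ᵢ Sᵢ`. Each of these chains stabilises by the ACC in `Sᵢ`, and for all but finitely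
many `i` it is constantly `Sᵢ`: a regular element `a ∈ I₀` is a unit of almost every `Sᵢ`
by finite character, and a right ideal containing a unit is the whole ring. Hence the chain
in `S` stabilises. -/

lemma exists_iInter_stable {ι β : Type*} {g : ι → ℕ → Set β} {T : Set ι}
    (hT : T.Finite) (hg : ∀ i ∈ T, ∃ N, ∀ n, N ≤ n → g i n = g i N)
    (hc : ∀ i ∉ T, ∀ n, g i n = g i 0) :
    ∃ N, ∀ n, N ≤ n → ⋂ i, g i n = ⋂ i, g i N := by
  have htail : ∀ᶠ N in Filter.atTop, ∀ i ∈ T, ∀ n, N ≤ n → g i n = g i N := by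
    refine (Filter.eventually_all_finite hT).2 fun i hi => ?_
    obtain ⟨N₀, hN₀⟩ := hg i hi
    exact Filter.eventually_atTop.2
      ⟨N₀, fun N hN n hn => (hN₀ n (hN.trans hn)).trans (hN₀ N hN).symm⟩
  obtain ⟨N, hN⟩ := htail.exists
  refine ⟨N, fun n hn => Set.iInter_congr fun i => ?_⟩
  by_cases hi : i ∈ T
  · exact hN i hi n hn
  · rw [hc i hi n, hc i hi N]

section Divisorial

variable {Q : Type*} [Ring Q]

lemma IsUnitIn.mono {R R' : Subring Q} (h : (R : Set Q) ⊆ R') {s : Q} (hs : IsUnitIn R s) :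
    IsUnitIn R' s :=
  let ⟨hsR, t, htR, hst, hts⟩ := hs
  ⟨h hsR, t, h htR, hst, hts⟩

lemma isUnitIn_zero_of_isRegularElemIn {R : Subring Q} (h : IsRegularElemIn R 0) :
    IsUnitIn R 0 := by
  have h10 : (1 : Q) = 0 := h.2.1 1 R.one_mem (zero_mul 1)
  exact ⟨R.zero_mem, 0, R.zero_mem, by rw [mul_zero, h10], by rw [mul_zero, h10]⟩

lemma IsRegularElemIn.of_isUnit {R : Subring Q} {a : Q} (hu : IsUnit a) (ha : a ∈ R) :
    IsRegularElemIn R a :=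
  ⟨ha, fun _ _ h => hu.mul_right_eq_zero.1 h, fun _ _ h => hu.mul_left_eq_zero.1 h⟩

lemma IsRightModSet.eq_of_isUnitIn_mem {R : Subring Q} {I : Set Q} (hI : IsRightModSet R I)
    (hIR : I ⊆ R) {a : Q} (ha : IsUnitIn R a) (haI : a ∈ I) : I = R := by
  obtain ⟨-, t, htR, hat, -⟩ := ha
  refine hIR.antisymm fun s hs => ?_
  have : a * (t * s) ∈ I := hI.2.2.2 a haI _ (R.mul_mem htR hs)
  rwa [← mul_assoc, hat, one_mul] at this

lemma subset_nuR_s14 (R : Subring Q) (X : Set Q) : X ⊆ nuR R X :=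
  fun _ hq _ hb => hb _ hq

lemma nuR_mono_s14 (R : Subring Q) {X Y : Set Q} (h : X ⊆ Y) : nuR R X ⊆ nuR R Y :=
  fun _ hq b hb => hq b fun x hx => hb x (h hx)

lemma nuR_nuR_s14 (R : Subring Q) (X : Set Q) : nuR R (nuR R X) = nuR R X :=
  Set.Subset.antisymm (fun _ hq b hb => hq b fun _ hy => hy b hb) (subset_nuR_s14 R _)

lemma nuR_subset {R : Subring Q} {X : Set Q} (h : X ⊆ R) : nuR R X ⊆ R := by
  intro q hq
  have : 1 * q ∈ R := hq 1 fun b hb => by rw [one_mul]; exact h hb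
  rwa [one_mul] at this

lemma isRightModSet_nuR_s14 (R : Subring Q) (X : Set Q) : IsRightModSet R (nuR R X) := by
  refine ⟨fun b _ => ?_, fun x hx y hy b hb => ?_, fun x hx b hb => ?_,
    fun x hx s hs b hb => ?_⟩
  · rw [mul_zero]; exact R.zero_mem
  · rw [mul_add]; exact R.add_mem (hx b hb) (hy b hb)
  · rw [mul_neg]; exact R.neg_mem (hx b hb)
  · rw [← mul_assoc]; exact R.mul_mem (hx b hb) hs

lemma nuR_eq_of_isUnitIn_mem {R : Subring Q} {X : Set Q} (hX : X ⊆ R) {a : Q}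
    (ha : IsUnitIn R a) (haX : a ∈ X) : nuR R X = R :=
  (isRightModSet_nuR_s14 R X).eq_of_isUnitIn_mem (nuR_subset hX) ha (subset_nuR_s14 R X haX)

lemma ACCRightDivisorial.exists_nuR_stable {R : Subring Q} (hR : ACCRightDivisorial R)
    {f : ℕ → Set Q} (hfR : ∀ n, f n ⊆ R) (hf : Monotone f) {a : Q}
    (ha : IsRegularElemIn R a) (haf : a ∈ f 0) :
    ∃ N, ∀ n, N ≤ n → nuR R (f n) = nuR R (f N) :=
  hR _ (fun n => ⟨⟨isRightModSet_nuR_s14 R _, nuR_subset (hfR n)⟩,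
      ⟨a, subset_nuR_s14 R _ (hf (Nat.zero_le n) haf), ha⟩, nuR_nuR_s14 R _⟩)
    fun n => nuR_mono_s14 R (hf n.le_succ)

section Overrings

variable {α : Type*} {S : Subring Q} {F : α → Subring Q}

lemma iInter_nuR_subset_nuR (hint : (S : Set Q) = ⋂ i, (F i : Set Q)) (X : Set Q) :
    ⋂ i, nuR (F i) X ⊆ nuR S X := by
  intro q hq b hb
  rw [hint] at hb ⊢
  exact Set.mem_iInter.2 fun i =>
    Set.mem_iInter.1 hq i b fun x hx => Set.mem_iInter.1 (hb x hx) i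

lemma eq_iInter_nuR_of_nuR_eq (hint : (S : Set Q) = ⋂ i, (F i : Set Q)) {I : Set Q}
    (hI : nuR S I = I) : I = ⋂ i, nuR (F i) I :=
  (Set.subset_iInter fun _ => subset_nuR_s14 _ _).antisymm
    ((iInter_nuR_subset_nuR hint I).trans hI.le)

lemma FiniteCharacter.finite_setOf_not_isUnitIn (hfc : FiniteCharacter S F)
    (hSF : ∀ i, (S : Set Q) ⊆ F i) {a : Q} (ha : IsRegularElemIn S a) :
    {i | ¬IsUnitIn (F i) a}.Finite := by
  by_cases hu : IsUnitIn S a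
  · simp [hu.mono (hSF _)]
  · refine hfc a ha.1 ?_ hu
    rintro rfl
    exact hu (isUnitIn_zero_of_isRegularElemIn ha)

end Overrings

end Divisorial

theorem acc_fails_implies_acc_fails_component_general
    {Q : Type*} [Ring Q] {α : Type*}
    (S : Subring Q) (hS : IsOrderIn S) (F : α → Subring Q)
    (hover : ∀ i, (S : Set Q) ⊆ (F i : Set Q) ∧ IsOrderIn (F i))
    (hint : (S : Set Q) = ⋂ i, (F i : Set Q))
    (hfc : FiniteCharacter S F)
    (hnacc : ¬ACCRightDivisorial S) :
    ∃ i : α, ¬ACCRightDivisorial (F i) := by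
  by_contra! hacc
  refine hnacc fun f hf hstep => ?_
  have hmono : Monotone f := monotone_nat_of_le_succ hstep
  have hfF : ∀ i n, f n ⊆ F i := fun i n => (hf n).1.2.trans (hover i).1
  obtain ⟨a, haf, ha⟩ := (hf 0).2.1
  have haF : ∀ i, IsRegularElemIn (F i) a := fun i =>
    .of_isUnit (hS.1 a ha) ((hover i).1 ha.1)
  obtain ⟨N, hN⟩ := exists_iInter_stable (g := fun i n => nuR (F i) (f n))
    (hfc.finite_setOf_not_isUnitIn (fun i => (hover i).1) ha)
    (fun i _ => (hacc i).exists_nuR_stable (hfF i) hmono (haF i) haf)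
    fun i hi n => by
      have hu : IsUnitIn (F i) a := not_not.1 hi
      rw [nuR_eq_of_isUnitIn_mem (hfF i n) hu (hmono (Nat.zero_le n) haf),
        nuR_eq_of_isUnitIn_mem (hfF i 0) hu haf]
  refine ⟨N, fun n hn => ?_⟩
  calc f n = ⋂ i, nuR (F i) (f n) := eq_iInter_nuR_of_nuR_eq hint (hf n).2.2
    _ = ⋂ i, nuR (F i) (f N) := hN n hn
    _ = f N := (eq_iInter_nuR_of_nuR_eq hint (hf N).2.2).symm

/-- Theorem 3.9. Let `S = ⋂ᵢ Sᵢ` be a finite-character family of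
overrings of an order `S` in a simple Artinian ring `Q`. If `S` fails the ACC on
regular right divisorial ideals then so does at least one `Sᵢ`. -/
theorem acc_fails_implies_acc_fails_component
    {Q : Type*} [Ring Q] [IsSimpleRing Q] [IsArtinianRing Q] {α : Type*}
    (S : Subring Q) (hS : IsOrderIn S) (F : α → Subring Q)
    (hover : ∀ i, (S : Set Q) ⊆ (F i : Set Q) ∧ IsOrderIn (F i))
    (hint : (S : Set Q) = ⋂ i, (F i : Set Q))
    (hfc : FiniteCharacter S F)
    (hnacc : ¬ACCRightDivisorial S) :
    ∃ i : α, ¬ACCRightDivisorial (F i) :=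
  acc_fails_implies_acc_fails_component_general S hS F hover hint hfc hnacc
end
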